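/- A property Φ : Σ^ω → D is safe if and only if it is upper semicontinuous, i.e., Φ(f) equals the infimum over prefixes s of f of sup_{g ∈ Σ^ω} Φ(sg), the suprema forming a monotonically decreasing sequence along prefixes. -/
import Mathlib


open Classical

variable {A : Type*}

/-- Concatenation of a finite word with an infinite word. -/
noncomputable def ext (s : List A) (g : ℕ → A) : ℕ → A :=
  fun n => if h : n < s.length then s.get ⟨n, h⟩ else g (n - s.length)

/-- The length-`n` prefix of an infinite word. -/
noncomputable def pref (f : ℕ → A) (n : ℕ) : List A := List.ofFn (fun i : Fin n => f i)

/-- The safety closure of a property. -/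
noncomputable def sclo {D : Type*} [CompleteLattice D] (Φ : (ℕ → A) → D) : (ℕ → A) → D :=
  fun f => ⨅ n : ℕ, ⨆ g : ℕ → A, Φ (ext (pref f n) g)

/-- A quantitative property is safe. -/
def Safe {D : Type*} [CompleteLattice D] (Φ : (ℕ → A) → D) : Prop :=
  ∀ f : ℕ → A, ∀ v : D, ¬ v ≤ Φ f → ∃ n : ℕ, ¬ v ≤ ⨆ g : ℕ → A, Φ (ext (pref f n) g)

/-- A quantitative property is live. -/
def Live {D : Type*} [CompleteLattice D] (Φ : (ℕ → A) → D) : Prop :=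
  ∀ f : ℕ → A, Φ f < ⊤ → ∃ v : D, ¬ v ≤ Φ f ∧ ∀ n : ℕ, v ≤ ⨆ g : ℕ → A, Φ (ext (pref f n) g)

lemma ext_pref_eq (f : ℕ → A) (n : ℕ) : ext (pref f n) (fun k => f (k + n)) = f := by
  funext m
  simp only [ext, pref, List.length_ofFn]
  split
  · simp
  · next h => congr 1; omega

theorem safe_iff_upper_semicontinuous {D : Type*} [CompleteLattice D] [Fintype A] [Nonempty A]
    (Φ : (ℕ → A) → D) :
    Safe Φ ↔ ∀ f : ℕ → A, Φ f = ⨅ n : ℕ, ⨆ g : ℕ → A, Φ (ext (pref f n) g) := by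
  constructor
  · intro hS f
    refine le_antisymm (le_iInf fun n => ?_) ?_
    · have := ext_pref_eq f n
      calc Φ f = Φ (ext (pref f n) (fun k => f (k + n))) := by rw [this]
        _ ≤ _ := le_iSup (fun g => Φ (ext (pref f n) g)) _
    · by_contra h
      obtain ⟨n, hn⟩ := hS f _ h
      exact hn (iInf_le (fun n => ⨆ g : ℕ → A, Φ (ext (pref f n) g)) n)
  · intro hU f v hv
    rw [hU f, le_iInf_iff] at hv
    push_neg at hv
    exact hv
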